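/- arXiv:2201.00058 — 2 statements merged into one kernel-verified Lean document; each statement's English description precedes it below -/
import Mathlib

section
/- Let w be a weight function on V and take w̃ = w. Then for every α ≥ 0 and every integer i, the homology H_i(R_α(Ĝ^{w,w})) of the augmented ℤ/2 chain complex of the Vietoris–Rips complex of Ĝ^{w,w} vanishes. -/
open scoped ENNReal
noncomputable section
attribute [local instance] Classical.propDecidable

namespace RTD

/-- The linear map between ℤ/2-spaces of chains given by an explicit coefficient matrix. -/
def lmap {ι κ : Type*} [Fintype ι] (M : ι → κ → ZMod 2) :
    (ι → ZMod 2) →ₗ[ZMod 2] (κ → ZMod 2) where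
  toFun f k := ∑ i, M i k * f i
  map_add' f g := by
    funext k
    simp [mul_add, Finset.sum_add_distrib]
  map_smul' c f := by
    funext k
    simp only [Pi.smul_apply, smul_eq_mul, RingHom.id_apply, Finset.mul_sum]
    exact Finset.sum_congr rfl fun i _ => by ring

variable {U : Type*}

/-- Simplexes of the Vietoris–Rips complex at threshold `α` having `n` vertices.
For `n = 0` this is the empty set, serving as the augmentation generator, so that
position `n` of the augmented chain complex corresponds to homological degree `n - 1`. -/
abbrev Simp [Fintype U] (d : U → U → ℝ≥0∞) (α : ℝ) (n : ℕ) :=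
  {σ : Finset U // σ.card = n ∧ ∀ x ∈ σ, ∀ y ∈ σ, x ≠ y → d x y ≤ ENNReal.ofReal α}

/-- Position-`n` chains (over ℤ/2) of the augmented chain complex of the Vietoris–Rips complex. -/
abbrev Ch [Fintype U] (d : U → U → ℝ≥0∞) (α : ℝ) (n : ℕ) := Simp d α n → ZMod 2

/-- The boundary operator of the augmented chain complex (over ℤ/2 all signs are 1);
the coefficient of `τ` in `∂ σ` is 1 exactly when `τ ⊂ σ`. -/
def bdry [Fintype U] (d : U → U → ℝ≥0∞) (α : ℝ) (n : ℕ) :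
    Ch d α (n + 1) →ₗ[ZMod 2] Ch d α n :=
  lmap fun σ τ => if τ.1 ⊆ σ.1 then 1 else 0

def cycles [Fintype U] (d : U → U → ℝ≥0∞) (α : ℝ) :
    (n : ℕ) → Submodule (ZMod 2) (Ch d α n)
  | 0 => ⊤
  | n + 1 => LinearMap.ker (bdry d α n)

/-- Homology of the augmented chain complex at position `n`
(i.e. reduced homology in degree `n - 1`). -/
abbrev homologyAt [Fintype U] (d : U → U → ℝ≥0∞) (α : ℝ) (n : ℕ) :=
  cycles d α n ⧸ Submodule.comap (cycles d α n).subtype (LinearMap.range (bdry d α n))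

/-- Reduced simplicial ℤ/2 homology `H_i`, `i ≥ 0`, of the Vietoris–Rips complex. -/
abbrev Hred [Fintype U] (d : U → U → ℝ≥0∞) (α : ℝ) (i : ℕ) := homologyAt d α (i + 1)

/-- `σ` is a simplex of the Vietoris–Rips complex at threshold `α`. -/
def IsVR [Fintype U] (d : U → U → ℝ≥0∞) (α : ℝ) (σ : Finset U) : Prop :=
  σ.Nonempty ∧ ∀ x ∈ σ, ∀ y ∈ σ, x ≠ y → d x y ≤ ENNReal.ofReal α

end RTD
namespace RTD

/-- Weight functions take extended nonnegative real values; `wmin` is the pointwise minimum. -/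
def wmin {N : ℕ} (w wt : Fin N → Fin N → ℝ≥0∞) : Fin N → Fin N → ℝ≥0∞ :=
  fun i j => min (w i j) (wt i j)

/-- Vertices of the graph Ĝ^{w,w̃}: the vertices `A_i` (`.inl (.inl i)`),
their copies `A'_i` (`.inl (.inr i)`), and the extra vertex `O` (`.inr ()`). -/
abbrev VH (N : ℕ) := (Fin N ⊕ Fin N) ⊕ Unit

/-- The edge weights of the weighted graph Ĝ^{w,w̃} (values on the diagonal are irrelevant). -/
def dhat {N : ℕ} (w wt : Fin N → Fin N → ℝ≥0∞) : VH N → VH N → ℝ≥0∞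
  | Sum.inl (Sum.inl i), Sum.inl (Sum.inl j) => w i j
  | Sum.inl (Sum.inl i), Sum.inl (Sum.inr j) =>
      if i < j then w i j else if i = j then 0 else ⊤
  | Sum.inl (Sum.inr i), Sum.inl (Sum.inl j) =>
      if j < i then w j i else if j = i then 0 else ⊤
  | Sum.inl (Sum.inr i), Sum.inl (Sum.inr j) => if i = j then 0 else min (w i j) (wt i j)
  | Sum.inl (Sum.inl _), Sum.inr _ => 0
  | Sum.inr _, Sum.inl (Sum.inl _) => 0
  | Sum.inl (Sum.inr _), Sum.inr _ => ⊤
  | Sum.inr _, Sum.inl (Sum.inr _) => ⊤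
  | Sum.inr _, Sum.inr _ => 0

/-- The set of unprimed vertices `A_i`, `i ∈ s`, of Ĝ^{w,w̃}. -/
def unp {N : ℕ} (s : Finset (Fin N)) : Finset (VH N) :=
  s.image fun i => Sum.inl (Sum.inl i)

/-- The set of primed vertices `A'_i`, `i ∈ s`, of Ĝ^{w,w̃}. -/
def prm {N : ℕ} (s : Finset (Fin N)) : Finset (VH N) :=
  s.image fun i => Sum.inl (Sum.inr i)

/-- The extra vertex `O` of Ĝ^{w,w̃}. -/
def vO {N : ℕ} : VH N := Sum.inr ()

/-- The indices `i` with `A_i ∈ τ`. -/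
def uIdx {N : ℕ} (τ : Finset (VH N)) : Finset (Fin N) :=
  Finset.univ.filter fun i => Sum.inl (Sum.inl i) ∈ τ

/-- The indices `i` with `A'_i ∈ τ`. -/
def pIdx {N : ℕ} (τ : Finset (VH N)) : Finset (Fin N) :=
  Finset.univ.filter fun i => Sum.inl (Sum.inr i) ∈ τ

end RTD

/-!
Match every simplex `σ` of `R_α(Ĝ^{w,w})` with `σ △ {apex σ}`, where `apex σ = A_m` for the least
`m` with `A'_m ∈ σ`, and `apex σ = O` if `σ` has no primed vertex. Adding the apex keeps `σ` a
simplex: `d(A_j, A_m) = d(A_j, A'_m)` for `j < m`, no `A_j` with `j > m` lies in `σ` since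
`d(A_j, A'_m) = ∞`, and `d(A_m, A'_j) = w_{mj} = d(A'_m, A'_j)` for `j > m` because `w̃ = w`.
The cone operator `h σ = σ ∪ {apex σ}` (or `0` if `apex σ ∈ σ`) then satisfies `∂h + h∂ = 1 + T`,
where `T` only produces simplices with a larger least primed index; so `T` is nilpotent and every
cycle is a boundary.
-/

/-- The cycles are stable under `T = ∂h + h∂ - 1`, and `z ≡ -T z` modulo boundaries for every
cycle `z`; iterate until `T ^ K = 0`. -/
theorem LinearMap.ker_le_range_of_isNilpotent_homotopy {R M₀ M₁ M₂ : Type*} [Ring R]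
    [AddCommGroup M₀] [AddCommGroup M₁] [AddCommGroup M₂]
    [Module R M₀] [Module R M₁] [Module R M₂]
    (d₁ : M₁ →ₗ[R] M₀) (d₂ : M₂ →ₗ[R] M₁) (h₀ : M₀ →ₗ[R] M₁) (h₁ : M₁ →ₗ[R] M₂)
    (hd : d₁ ∘ₗ d₂ = 0) (hnil : IsNilpotent (d₂ ∘ₗ h₁ + h₀ ∘ₗ d₁ - LinearMap.id)) :
    LinearMap.ker d₁ ≤ LinearMap.range d₂ := by
  set T := d₂ ∘ₗ h₁ + h₀ ∘ₗ d₁ - LinearMap.id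
  obtain ⟨K, hK⟩ := hnil
  have hT : ∀ z ∈ LinearMap.ker d₁, T z = d₂ (h₁ z) - z := fun z hz => by
    simp [T, LinearMap.mem_ker.mp hz]
  have hT_ker : ∀ z ∈ LinearMap.ker d₁, T z ∈ LinearMap.ker d₁ := fun z hz => by
    rw [LinearMap.mem_ker, hT z hz, map_sub, ← LinearMap.comp_apply, hd,
      LinearMap.mem_ker.mp hz, LinearMap.zero_apply, sub_zero]
  have key : ∀ k, ∀ z ∈ LinearMap.ker d₁, (T ^ k) z ∈ LinearMap.range d₂ →
      z ∈ LinearMap.range d₂ := by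
    intro k
    induction k with
    | zero => exact fun z _ hz => hz
    | succ k ih =>
      intro z hz hTz
      have hTz' : T z ∈ LinearMap.range d₂ :=
        ih _ (hT_ker z hz) (by rwa [← Module.End.mul_apply, ← pow_succ])
      have : z = d₂ (h₁ z) - T z := by rw [hT z hz, sub_sub_cancel]
      rw [this]
      exact sub_mem (LinearMap.mem_range_self _ _) hTz'
  intro z hz
  exact key K z hz (by rw [hK, LinearMap.zero_apply]; exact zero_mem _)

namespace RTD

section Lmap

variable {ι κ μ : Type*} [Fintype ι]

theorem lmap_apply (M : ι → κ → ZMod 2) (f : ι → ZMod 2) (k : κ) :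
    lmap M f k = ∑ i, M i k * f i := rfl

theorem lmap_comp [Fintype κ] (M : ι → κ → ZMod 2) (M' : κ → μ → ZMod 2) :
    lmap M' ∘ₗ lmap M = lmap fun i k => ∑ j, M i j * M' j k := by
  ext f m
  simp only [LinearMap.comp_apply, lmap_apply, Finset.mul_sum, Finset.sum_mul]
  rw [Finset.sum_comm]
  exact Finset.sum_congr rfl fun i _ => Finset.sum_congr rfl fun j _ => by ring

theorem lmap_add (M M' : ι → κ → ZMod 2) : lmap (M + M') = lmap M + lmap M' := by
  ext f k
  simp [lmap_apply, add_mul, Finset.sum_add_distrib]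

theorem lmap_sub (M M' : ι → κ → ZMod 2) : lmap (M - M') = lmap M - lmap M' := by
  ext f k
  simp [lmap_apply, sub_mul, Finset.sum_sub_distrib]

theorem lmap_ite_eq_id : lmap (fun i j : ι => if i = j then (1 : ZMod 2) else 0) = LinearMap.id := by
  ext f k
  simp [lmap_apply]

theorem isNilpotent_lmap {M : ι → ι → ZMod 2} (r : ι → ℕ) (hM : ∀ i j, M i j ≠ 0 → r i < r j) :
    IsNilpotent (lmap M) := by
  have vanish : ∀ k (f : ι → ZMod 2) j, r j < k → (lmap M ^ k) f j = 0 := by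
    intro k
    induction k with
    | zero => intro f j hj; omega
    | succ k ih =>
      intro f j hj
      rw [pow_succ', Module.End.mul_apply, lmap_apply]
      refine Finset.sum_eq_zero fun i _ => ?_
      by_cases hij : M i j = 0
      · rw [hij, zero_mul]
      · rw [ih f i (by have := hM i j hij; omega), mul_zero]
  refine ⟨Finset.univ.sup r + 1, LinearMap.ext fun f => funext fun j => vanish _ f j ?_⟩
  exact Nat.lt_succ_of_le (Finset.le_sup (Finset.mem_univ j))

end Lmap

section Boundary

variable {U : Type*} [Fintype U] {d : U → U → ℝ≥0∞} {α : ℝ}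

theorem card_between {n : ℕ} (ρ : Simp d α n) (τ : Simp d α (n + 2)) (h : ρ.1 ⊆ τ.1) :
    (Finset.univ.filter fun σ : Simp d α (n + 1) => ρ.1 ⊆ σ.1 ∧ σ.1 ⊆ τ.1).card = 2 := by
  have hcard : (τ.1 \ ρ.1).card = 2 := by
    rw [Finset.card_sdiff_of_subset h, τ.2.1, ρ.2.1]; omega
  refine Eq.trans ?_ hcard
  symm
  have hsub : ∀ x ∈ τ.1 \ ρ.1, insert x ρ.1 ⊆ τ.1 := fun x hx =>
    Finset.insert_subset (Finset.mem_sdiff.mp hx).1 h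
  refine Finset.card_bij (fun x hx => ⟨insert x ρ.1, ?_, ?_⟩) ?_ ?_ ?_
  · rw [Finset.card_insert_of_notMem (Finset.mem_sdiff.mp hx).2, ρ.2.1]
  · exact fun a ha b hb => τ.2.2 a (hsub x hx ha) b (hsub x hx hb)
  · intro x hx
    exact Finset.mem_filter.mpr ⟨Finset.mem_univ _, Finset.subset_insert x ρ.1, hsub x hx⟩
  · intro x hx y hy hxy
    have hx' := (Finset.mem_sdiff.mp hx).2
    have hxy' : insert x ρ.1 = insert y ρ.1 := congrArg Subtype.val hxy
    have : x ∈ insert y ρ.1 := hxy' ▸ Finset.mem_insert_self x ρ.1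
    exact (Finset.mem_insert.mp this).resolve_right hx'
  · intro σ hσ
    simp only [Finset.mem_filter, Finset.mem_univ, true_and] at hσ
    obtain ⟨x, hxσ, hxρ⟩ : ∃ x ∈ σ.1, x ∉ ρ.1 := by
      by_contra! hle
      have := Finset.card_le_card hle
      rw [σ.2.1, ρ.2.1] at this
      omega
    refine ⟨x, Finset.mem_sdiff.mpr ⟨hσ.2 hxσ, hxρ⟩, Subtype.ext ?_⟩
    refine Finset.eq_of_subset_of_card_le (Finset.insert_subset hxσ hσ.1) ?_
    rw [Finset.card_insert_of_notMem hxρ, σ.2.1, ρ.2.1]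

theorem bdry_comp_bdry (n : ℕ) : bdry d α n ∘ₗ bdry d α (n + 1) = 0 := by
  rw [bdry, bdry, lmap_comp]
  refine LinearMap.ext fun f => funext fun ρ => Finset.sum_eq_zero fun τ _ => ?_
  suffices (∑ σ : Simp d α (n + 1), if ρ.1 ⊆ σ.1 ∧ σ.1 ⊆ τ.1 then (1 : ZMod 2) else 0) = 0 by
    simp only [ite_mul, one_mul, zero_mul, ← ite_and, and_comm] at this ⊢
    rw [this, zero_mul]
  rw [Finset.sum_boole]
  by_cases h : ρ.1 ⊆ τ.1
  · rw [card_between ρ τ h]; rfl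
  · rw [Finset.filter_false_of_mem fun σ _ hσ => h (hσ.1.trans hσ.2)]; rfl

theorem range_bdry_zero (u : U) : LinearMap.range (bdry d α 0) = ⊤ := by
  let vertex : Simp d α 1 := ⟨{u}, Finset.card_singleton u, by simp⟩
  let empty : Simp d α 0 := ⟨∅, Finset.card_empty, by simp⟩
  have h_empty : ∀ τ : Simp d α 0, τ = empty := fun τ =>
    Subtype.ext (Finset.card_eq_zero.mp τ.2.1)
  refine LinearMap.range_eq_top.mpr fun f => ⟨Pi.single vertex (f empty), funext fun τ => ?_⟩
  rw [bdry, lmap_apply, Fintype.sum_eq_single vertex fun σ hσ => by simp [hσ], h_empty τ]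
  simp [empty]

end Boundary

section Cone

variable {U : Type*} {d : U → U → ℝ≥0∞} {α : ℝ}

variable (d α) in
def RipsClique (σ : Finset U) : Prop :=
  ∀ x ∈ σ, ∀ y ∈ σ, x ≠ y → d x y ≤ ENNReal.ofReal α

theorem RipsClique.insert {σ : Finset U} {v : U} (hd : ∀ x y, d x y = d y x)
    (hσ : RipsClique d α σ) (hv : ∀ x ∈ σ, x ≠ v → d v x ≤ ENNReal.ofReal α) :
    RipsClique d α (insert v σ) := by
  intro x hx y hy hxy
  rcases Finset.mem_insert.mp hx with hxv | hx <;> rcases Finset.mem_insert.mp hy with hyv | hy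
  · exact absurd (hxv.trans hyv.symm) hxy
  · exact hxv ▸ hv y hy (hxv ▸ Ne.symm hxy)
  · exact hyv ▸ hd x v ▸ hv x hx (hyv ▸ hxy)
  · exact hσ x hx y hy hxy

/-- A complete acyclic matching `σ ↔ σ ∪ {apex σ}` of the Vietoris–Rips complex, in the sense of
discrete Morse theory: erasing a vertex either keeps the apex or raises the level. -/
structure ConeSelector (d : U → U → ℝ≥0∞) (α : ℝ) where
  apex : Finset U → U
  level : Finset U → ℕ
  ripsClique_insert_apex : ∀ σ, RipsClique d α σ → RipsClique d α (insert (apex σ) σ)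
  apex_insert_apex : ∀ σ, apex (insert (apex σ) σ) = apex σ
  apex_erase_apex : ∀ σ, apex (σ.erase (apex σ)) = apex σ
  level_insert_apex : ∀ σ, level (insert (apex σ) σ) = level σ
  level_erase_apex : ∀ σ, level (σ.erase (apex σ)) = level σ
  apex_erase_or_level_lt : ∀ σ x, apex (σ.erase x) = apex σ ∨ level σ < level (σ.erase x)

namespace ConeSelector

variable (c : ConeSelector d α)

theorem insert_apex_eq_iff {ρ τ : Finset U} :
    (c.apex ρ ∉ ρ ∧ τ = insert (c.apex ρ) ρ) ↔ (c.apex τ ∈ τ ∧ ρ = τ.erase (c.apex τ)) := by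
  constructor
  · rintro ⟨hρ, rfl⟩
    rw [c.apex_insert_apex]
    exact ⟨Finset.mem_insert_self _ _, (Finset.erase_insert hρ).symm⟩
  · rintro ⟨hτ, rfl⟩
    rw [c.apex_erase_apex]
    exact ⟨Finset.notMem_erase _ _, (Finset.insert_erase hτ).symm⟩

theorem apex_eq_of_erase_eq {σ τ : Finset U} {x : U} (hτ : τ = σ.erase x)
    (hle : c.level τ ≤ c.level σ) : c.apex τ = c.apex σ := by
  subst hτ
  exact (c.apex_erase_or_level_lt σ x).resolve_right hle.not_gt

theorem up_iff_down {σ τ : Finset U} (hcard : σ.card = τ.card) (hne : σ ≠ τ)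
    (hle : c.level τ ≤ c.level σ) :
    (c.apex σ ∉ σ ∧ τ ⊆ insert (c.apex σ) σ) ↔ (c.apex τ ∈ τ ∧ τ.erase (c.apex τ) ⊆ σ) := by
  constructor
  · rintro ⟨hσ, hsub⟩
    obtain ⟨x, hxσ, hxτ⟩ : ∃ x ∈ σ, x ∉ τ := by
      by_contra! h
      exact hne (Finset.eq_of_subset_of_card_le h hcard.ge)
    have hxv : x ≠ c.apex σ := fun h => hσ (h ▸ hxσ)
    have hτ : τ = (insert (c.apex σ) σ).erase x := by
      refine Finset.eq_of_subset_of_card_le (Finset.subset_erase.mpr ⟨hsub, hxτ⟩) ?_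
      rw [Finset.card_erase_of_mem (Finset.mem_insert_of_mem hxσ),
        Finset.card_insert_of_notMem hσ, hcard, Nat.add_sub_cancel]
    have hapex : c.apex τ = c.apex σ := by
      rw [c.apex_eq_of_erase_eq hτ (by rwa [c.level_insert_apex]), c.apex_insert_apex]
    rw [hapex]
    exact ⟨hτ ▸ Finset.mem_erase.mpr ⟨hxv.symm, Finset.mem_insert_self _ _⟩,
      Finset.subset_insert_iff.mp hsub⟩
  · rintro ⟨hτ, hsub⟩
    obtain ⟨y, hyσ, hyτ⟩ : ∃ y ∈ σ, y ∉ τ.erase (c.apex τ) := by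
      by_contra! h
      have := Finset.card_le_card h
      rw [Finset.card_erase_of_mem hτ] at this
      have : 0 < τ.card := Finset.card_pos.mpr ⟨_, hτ⟩
      omega
    have hρ : τ.erase (c.apex τ) = σ.erase y := by
      refine Finset.eq_of_subset_of_card_le (Finset.subset_erase.mpr ⟨hsub, hyτ⟩) ?_
      rw [Finset.card_erase_of_mem hyσ, Finset.card_erase_of_mem hτ, hcard]
    have hapex : c.apex σ = c.apex τ := by
      rw [← c.apex_erase_apex τ, c.apex_eq_of_erase_eq hρ (by rwa [c.level_erase_apex])]
    rw [hapex]
    refine ⟨fun hmem => hne ?_, Finset.subset_insert_iff.mpr hsub⟩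
    refine (Finset.eq_of_subset_of_card_le ?_ hcard.le).symm
    rw [← Finset.insert_erase hτ]
    exact Finset.insert_subset hmem hsub

variable [Fintype U]

def homotopy (n : ℕ) : Ch d α n →ₗ[ZMod 2] Ch d α (n + 1) :=
  lmap fun σ τ => if c.apex σ.1 ∉ σ.1 ∧ τ.1 = insert (c.apex σ.1) σ.1 then 1 else 0

theorem bdry_comp_homotopy (n : ℕ) :
    bdry d α (n + 1) ∘ₗ c.homotopy (n + 1) = lmap fun σ τ =>
      if c.apex σ.1 ∉ σ.1 ∧ τ.1 ⊆ insert (c.apex σ.1) σ.1 then 1 else 0 := by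
  refine (lmap_comp _ _).trans (congrArg lmap (funext fun σ => funext fun τ => ?_))
  by_cases hσ : c.apex σ.1 ∈ σ.1
  · simp [hσ]
  · have hcard : (insert (c.apex σ.1) σ.1).card = n + 1 + 1 := by
      rw [Finset.card_insert_of_notMem hσ, σ.2.1]
    rw [Fintype.sum_eq_single ⟨_, hcard, c.ripsClique_insert_apex _ σ.2.2⟩ fun ρ hρ => by
      simp [hσ, Subtype.ext_iff.not.mp hρ]]
    simp [hσ]

theorem homotopy_comp_bdry (n : ℕ) :
    c.homotopy n ∘ₗ bdry d α n = lmap fun σ τ =>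
      if c.apex τ.1 ∈ τ.1 ∧ τ.1.erase (c.apex τ.1) ⊆ σ.1 then 1 else 0 := by
  refine (lmap_comp _ _).trans (congrArg lmap (funext fun σ => funext fun τ => ?_))
  simp_rw [c.insert_apex_eq_iff]
  by_cases hτ : c.apex τ.1 ∈ τ.1
  · have hcard : (τ.1.erase (c.apex τ.1)).card = n := by
      rw [Finset.card_erase_of_mem hτ, τ.2.1]; rfl
    have hclique : RipsClique d α (τ.1.erase (c.apex τ.1)) := fun x hx y hy =>
      τ.2.2 x (Finset.mem_of_mem_erase hx) y (Finset.mem_of_mem_erase hy)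
    rw [Fintype.sum_eq_single ⟨_, hcard, hclique⟩ fun ρ hρ => by
      simp [Subtype.ext_iff.not.mp hρ]]
    simp [hτ]
  · simp [hτ]

theorem isNilpotent_homotopy (n : ℕ) :
    IsNilpotent (bdry d α (n + 1) ∘ₗ c.homotopy (n + 1) + c.homotopy n ∘ₗ bdry d α n -
      LinearMap.id) := by
  rw [c.bdry_comp_homotopy, c.homotopy_comp_bdry, ← lmap_ite_eq_id, ← lmap_add, ← lmap_sub]
  refine isNilpotent_lmap (fun σ => c.level σ.1) fun σ τ hστ => ?_
  by_contra! hle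
  apply hστ
  simp only [Pi.add_apply, Pi.sub_apply]
  by_cases heq : σ = τ
  · subst heq
    by_cases hσ : c.apex σ.1 ∈ σ.1 <;> simp [hσ, Finset.subset_insert, Finset.erase_subset]
  · simp only [if_neg heq, c.up_iff_down (σ.2.1.trans τ.2.1.symm)
      (Subtype.ext_iff.not.mp heq) hle, CharTwo.add_self_eq_zero, sub_zero]

theorem ker_bdry_le_range (c : ConeSelector d α) (n : ℕ) :
    LinearMap.ker (bdry d α n) ≤ LinearMap.range (bdry d α (n + 1)) :=
  LinearMap.ker_le_range_of_isNilpotent_homotopy _ _ _ _ (bdry_comp_bdry n)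
    (c.isNilpotent_homotopy n)

theorem subsingleton_homologyAt (c : ConeSelector d α) (n : ℕ) :
    Subsingleton (homologyAt d α n) := by
  rw [Submodule.Quotient.subsingleton_iff, Submodule.comap_subtype_eq_top]
  cases n with
  | zero => exact (range_bdry_zero (c.apex ∅)).ge
  | succ n => exact c.ker_bdry_le_range n

end ConeSelector

end Cone

section HatGraph

-- `ConeSelector` and the chain groups decide equality of vertices classically; so must the
-- `insert` and `erase` on `VH N` below.
attribute [-instance] instDecidableEqSum

variable {N : ℕ}

theorem dhat_comm {w : Fin N → Fin N → ℝ≥0∞} (hw : ∀ i j, w i j = w j i) (a b : VH N) :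
    dhat w w a b = dhat w w b a := by
  rcases a with (i | i) | _ <;> rcases b with (j | j) | _ <;> simp only [dhat]
  · exact hw i j
  · simp only [eq_comm (a := i), hw i j]

theorem pIdx_insert_of_ne {σ : Finset (VH N)} {x : VH N} (hx : ∀ j, x ≠ Sum.inl (Sum.inr j)) :
    pIdx (insert x σ) = pIdx σ := by
  ext j
  simp [pIdx, (hx j).symm]

theorem pIdx_erase_of_ne {σ : Finset (VH N)} {x : VH N} (hx : ∀ j, x ≠ Sum.inl (Sum.inr j)) :
    pIdx (σ.erase x) = pIdx σ := by
  ext j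
  simp [pIdx, (hx j).symm]

theorem pIdx_erase_inr (σ : Finset (VH N)) (i : Fin N) :
    pIdx (σ.erase (Sum.inl (Sum.inr i))) = (pIdx σ).erase i := by
  ext j
  simp [pIdx]

theorem mem_pIdx {σ : Finset (VH N)} {i : Fin N} : i ∈ pIdx σ ↔ Sum.inl (Sum.inr i) ∈ σ := by
  simp [pIdx]

def minApex (p : Finset (Fin N)) : VH N :=
  if h : p.Nonempty then Sum.inl (Sum.inl (p.min' h)) else vO

def minLevel (p : Finset (Fin N)) : ℕ :=
  if h : p.Nonempty then p.min' h else N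

theorem minApex_ne_inr (p : Finset (Fin N)) (j : Fin N) : minApex p ≠ Sum.inl (Sum.inr j) := by
  unfold minApex vO
  split_ifs <;> simp

theorem minApex_erase_or_minLevel_lt (p : Finset (Fin N)) (j : Fin N) :
    minApex (p.erase j) = minApex p ∨ minLevel p < minLevel (p.erase j) := by
  by_cases hp : p.Nonempty
  swap
  · simp [Finset.not_nonempty_iff_eq_empty.mp hp]
  by_cases hj : j = p.min' hp
  · right
    subst hj
    unfold minLevel
    rw [dif_pos hp]
    split_ifs with hp'
    · exact Fin.lt_def.mp (p.min'_lt_of_mem_erase_min' hp ((p.erase _).min'_mem hp'))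
    · exact (p.min' hp).isLt
  · left
    have hmem : p.min' hp ∈ p.erase j := Finset.mem_erase.mpr ⟨Ne.symm hj, p.min'_mem hp⟩
    have hmin : (p.erase j).min' ⟨_, hmem⟩ = p.min' hp :=
      ((p.erase j).min'_eq_iff _ _).mpr
        ⟨hmem, fun b hb => p.min'_le b (Finset.mem_of_mem_erase hb)⟩
    simp only [minApex, dif_pos hp]
    rw [dif_pos ⟨_, hmem⟩, hmin]

theorem ripsClique_insert_minApex {w : Fin N → Fin N → ℝ≥0∞} (hw : ∀ i j, w i j = w j i)
    {α : ℝ} {σ : Finset (VH N)} (hσ : RipsClique (dhat w w) α σ) :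
    RipsClique (dhat w w) α (insert (minApex (pIdx σ)) σ) := by
  refine hσ.insert (dhat_comm hw) fun x hx hxv => ?_
  unfold minApex at hxv ⊢
  split_ifs at hxv ⊢ with hp
  · set m := (pIdx σ).min' hp
    have hm : Sum.inl (Sum.inr m) ∈ σ := mem_pIdx.mp ((pIdx σ).min'_mem hp)
    rcases x with (j | j) | _
    · have hjm : j ≠ m := fun h => hxv (h ▸ rfl)
      have h := hσ _ hx _ hm (by simp)
      simp only [dhat] at h ⊢
      rcases lt_or_gt_of_ne hjm with hlt | hgt
      · rw [if_pos hlt] at h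
        rwa [hw]
      · rw [if_neg hgt.not_gt, if_neg hjm, top_le_iff] at h
        exact absurd h ENNReal.ofReal_ne_top
    · simp only [dhat]
      have hmj : m ≤ j := (pIdx σ).min'_le j (mem_pIdx.mpr hx)
      rcases hmj.lt_or_eq with hlt | heq
      · have h := hσ _ hm _ hx (by simp [hlt.ne])
        simp only [dhat, if_neg hlt.ne, min_self] at h
        rwa [if_pos hlt]
      · simp [heq]
    · simp [dhat]
  · rcases x with (j | j) | _
    · simp [dhat, vO]
    · exact absurd ⟨j, mem_pIdx.mpr hx⟩ hp
    · exact absurd rfl hxv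

def hatConeSelector {w : Fin N → Fin N → ℝ≥0∞} (hw : ∀ i j, w i j = w j i) (α : ℝ) :
    ConeSelector (dhat w w) α where
  apex σ := minApex (pIdx σ)
  level σ := minLevel (pIdx σ)
  ripsClique_insert_apex _ := ripsClique_insert_minApex hw
  apex_insert_apex σ := by simp [pIdx_insert_of_ne, minApex_ne_inr]
  apex_erase_apex σ := by simp [pIdx_erase_of_ne, minApex_ne_inr]
  level_insert_apex σ := by simp [pIdx_insert_of_ne, minApex_ne_inr]
  level_erase_apex σ := by simp [pIdx_erase_of_ne, minApex_ne_inr]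
  apex_erase_or_level_lt σ x := by
    rcases x with (i | j) | _
    · simp [pIdx_erase_of_ne]
    · simpa [pIdx_erase_inr] using minApex_erase_or_minLevel_lt (pIdx σ) j
    · simp [pIdx_erase_of_ne]

end HatGraph

theorem homology_hatG_self_vanishes_general
    (N : ℕ) (w : Fin N → Fin N → ℝ≥0∞) (hw : ∀ i j, w i j = w j i)
    (α : ℝ) :
    ∀ n : ℕ, Subsingleton (homologyAt (dhat w w) α n) :=
  (hatConeSelector hw α).subsingleton_homologyAt

/-- If `w̃ = w`, then for every `α ≥ 0` all the homology of the augmented ℤ/2 chain complex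
of the Vietoris–Rips complex of `Ĝ^{w,w}` vanishes: the homology at every position `n` of
the augmented complex (i.e. in every degree `n - 1 ≥ -1`, all other degrees carrying the
zero space) is zero. -/
theorem homology_hatG_self_vanishes
    (N : ℕ) (w : Fin N → Fin N → ℝ≥0∞) (hw : ∀ i j, w i j = w j i)
    (α : ℝ) (hα : 0 ≤ α) :
    ∀ n : ℕ, Subsingleton (homologyAt (dhat w w) α n) :=
  homology_hatG_self_vanishes_general N w hw α

end RTD
end
end

section
/- Let w be a weight function on V and α ≥ 0. A nonempty subset σ of the vertex set of Ĝ^w is a simplex of R_α(Ĝ^w) if and only if σ has one of the following four forms, where i_1 < … < i_n are indices in {1,…,N}: (1) {A_{i_1},…,A_{i_k}, A'_{i_k},…,A'_{i_n}} with 1 ≤ k ≤ n, subject to w_{A_{i_r}A_{i_s}} ≤ α for every pair r < s with r ≤ k; (2) {A_{i_1},…,A_{i_k}, A'_{i_{k+1}},…,A'_{i_n}} with 0 ≤ k ≤ n, subject to w_{A_{i_r}A_{i_s}} ≤ α for every pair r < s with r ≤ k; (3) {O, A_{i_1},…,A_{i_n}} with w_{A_{i_r}A_{i_s}} ≤ α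 for all r < s; (4) {O', A'_{i_1},…,A'_{i_n}} with no condition on w. -/
open scoped ENNReal
noncomputable section
attribute [local instance] Classical.propDecidable

namespace RTD

/-- Vertices of the graph Ĝ^w: the vertices `A_i` (`.inl (.inl i)`), their copies `A'_i`
(`.inl (.inr i)`), and the two extra vertices `O` (`.inr false`) and `O'` (`.inr true`). -/
abbrev VH2 (N : ℕ) := (Fin N ⊕ Fin N) ⊕ Bool

/-- The edge weights of the weighted graph Ĝ^w (values on the diagonal are irrelevant). -/
def dhat2 {N : ℕ} (w : Fin N → Fin N → ℝ≥0∞) : VH2 N → VH2 N → ℝ≥0∞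
  | Sum.inl (Sum.inl i), Sum.inl (Sum.inl j) => w i j
  | Sum.inl (Sum.inl i), Sum.inl (Sum.inr j) =>
      if i < j then w i j else if i = j then 0 else ⊤
  | Sum.inl (Sum.inr i), Sum.inl (Sum.inl j) =>
      if j < i then w j i else if j = i then 0 else ⊤
  | Sum.inl (Sum.inr _), Sum.inl (Sum.inr _) => 0
  | Sum.inl (Sum.inl _), Sum.inr b => if b then ⊤ else 0
  | Sum.inr b, Sum.inl (Sum.inl _) => if b then ⊤ else 0
  | Sum.inl (Sum.inr _), Sum.inr b => if b then 0 else ⊤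
  | Sum.inr b, Sum.inl (Sum.inr _) => if b then 0 else ⊤
  | Sum.inr a, Sum.inr b => if a = b then 0 else ⊤

/-- The set of unprimed vertices `A_i`, `i ∈ s`, of Ĝ^w. -/
def unp2 {N : ℕ} (s : Finset (Fin N)) : Finset (VH2 N) :=
  s.image fun i => Sum.inl (Sum.inl i)

/-- The set of primed vertices `A'_i`, `i ∈ s`, of Ĝ^w. -/
def prm2 {N : ℕ} (s : Finset (Fin N)) : Finset (VH2 N) :=
  s.image fun i => Sum.inl (Sum.inr i)

/-- The extra vertex `O` of Ĝ^w. -/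
def vO2 {N : ℕ} : VH2 N := Sum.inr false

/-- The extra vertex `O'` of Ĝ^w. -/
def vO2' {N : ℕ} : VH2 N := Sum.inr true

/-- The indices `i` with `A_i ∈ τ`. -/
def uIdx2 {N : ℕ} (τ : Finset (VH2 N)) : Finset (Fin N) :=
  Finset.univ.filter fun i => Sum.inl (Sum.inl i) ∈ τ

/-- The indices `i` with `A'_i ∈ τ`. -/
def pIdx2 {N : ℕ} (τ : Finset (VH2 N)) : Finset (Fin N) :=
  Finset.univ.filter fun i => Sum.inl (Sum.inr i) ∈ τ

end RTD

namespace RTD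

lemma dhat2_top_not_le {α : ℝ} : ¬ ((⊤ : ℝ≥0∞) ≤ ENNReal.ofReal α) := by
  simp [top_le_iff, ENNReal.ofReal_ne_top]

lemma mem_unp2 {N : ℕ} {s : Finset (Fin N)} {x : VH2 N} :
    x ∈ unp2 s ↔ ∃ i ∈ s, x = Sum.inl (Sum.inl i) := by
  simp [unp2, eq_comm]

lemma mem_prm2 {N : ℕ} {p : Finset (Fin N)} {x : VH2 N} :
    x ∈ prm2 p ↔ ∃ i ∈ p, x = Sum.inl (Sum.inr i) := by
  simp [prm2, eq_comm]

/-- Combined sufficiency lemma for forms (1) and (2). -/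
lemma isVR_of_sp {N : ℕ} {w : Fin N → Fin N → ℝ≥0∞} (hw : ∀ i j, w i j = w j i)
    {α : ℝ} {s p : Finset (Fin N)}
    (hsp : ∀ a ∈ s, ∀ b ∈ p, a ≤ b)
    (hwc : ∀ a ∈ s, ∀ b ∈ s ∪ p, a < b → w a b ≤ ENNReal.ofReal α)
    (hne : (s ∪ p).Nonempty) :
    IsVR (dhat2 w) α (unp2 s ∪ prm2 p) := by
  constructor
  · rcases hne with ⟨a, ha⟩
    rcases Finset.mem_union.mp ha with ha | ha
    · exact ⟨Sum.inl (Sum.inl a), Finset.mem_union_left _ (mem_unp2.mpr ⟨a, ha, rfl⟩)⟩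
    · exact ⟨Sum.inl (Sum.inr a), Finset.mem_union_right _ (mem_prm2.mpr ⟨a, ha, rfl⟩)⟩
  · intro x hx y hy hxy
    rcases Finset.mem_union.mp hx with hx | hx
    · rcases mem_unp2.mp hx with ⟨a, ha, rfl⟩
      rcases Finset.mem_union.mp hy with hy | hy
      · rcases mem_unp2.mp hy with ⟨b, hb, rfl⟩
        have hab : a ≠ b := fun h => hxy (by rw [h])
        rcases lt_or_gt_of_ne hab with h | h
        · simpa [dhat2] using hwc a ha b (Finset.mem_union_left _ hb) h
        · have := hwc b hb a (Finset.mem_union_left _ ha) h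
          simpa [dhat2, hw a b] using this
      · rcases mem_prm2.mp hy with ⟨b, hb, rfl⟩
        have hab : a ≤ b := hsp a ha b hb
        rcases lt_or_eq_of_le hab with h | h
        · have := hwc a ha b (Finset.mem_union_right _ hb) h
          simpa [dhat2, h] using this
        · simp [dhat2, h]
    · rcases mem_prm2.mp hx with ⟨a, ha, rfl⟩
      rcases Finset.mem_union.mp hy with hy | hy
      · rcases mem_unp2.mp hy with ⟨b, hb, rfl⟩
        have hab : b ≤ a := hsp b hb a ha
        rcases lt_or_eq_of_le hab with h | h
        · have := hwc b hb a (Finset.mem_union_right _ ha) h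
          simpa [dhat2, h] using this
        · simp [dhat2, h]
      · rcases mem_prm2.mp hy with ⟨b, hb, rfl⟩
        simp [dhat2]

/-- **Characterization of the simplexes of `R_α(Ĝ^w)`.**  A nonempty subset `σ` of the
vertex set of `Ĝ^w` is a simplex of the Vietoris–Rips complex `R_α(Ĝ^w)` if and only if it
has one of the following four forms (here `s`, `p` are the sets of indices of the unprimed
and primed vertices of `σ`):
(1) `{A_{i_1},…,A_{i_k}, A'_{i_k},…,A'_{i_n}}` with `1 ≤ k ≤ n`, i.e. `s` and `p` are
nonempty and share exactly the element `m = max s = min p`, subject to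
`w_{A_{i_r}A_{i_s}} ≤ α` for every pair `r < s` with `r ≤ k` (i.e. for every pair `a < b`
of indices of `σ` whose smaller member `a` lies in `s`);
(2) `{A_{i_1},…,A_{i_k}, A'_{i_{k+1}},…,A'_{i_n}}` with `0 ≤ k ≤ n`, i.e. every element of
`s` is smaller than every element of `p`, subject to the same weight condition;
(3) `{O, A_{i_1},…,A_{i_n}}` with `w_{A_{i_r}A_{i_s}} ≤ α` for all `r < s`;
(4) `{O', A'_{i_1},…,A'_{i_n}}`, with no condition on `w`. -/
theorem isVR_hatGw_iff
    (N : ℕ) (w : Fin N → Fin N → ℝ≥0∞) (hw : ∀ i j, w i j = w j i)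
    (α : ℝ) (hα : 0 ≤ α) (σ : Finset (VH2 N)) :
    IsVR (dhat2 w) α σ ↔
      -- form (1)
      (∃ s p : Finset (Fin N), s.Nonempty ∧ p.Nonempty ∧
        (∃ m, m ∈ s ∧ m ∈ p ∧ (∀ a ∈ s, a ≤ m) ∧ (∀ b ∈ p, m ≤ b)) ∧
        σ = unp2 s ∪ prm2 p ∧
        (∀ a ∈ s, ∀ b ∈ s ∪ p, a < b → w a b ≤ ENNReal.ofReal α)) ∨
      -- form (2)
      (∃ s p : Finset (Fin N), (s ∪ p).Nonempty ∧
        (∀ a ∈ s, ∀ b ∈ p, a < b) ∧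
        σ = unp2 s ∪ prm2 p ∧
        (∀ a ∈ s, ∀ b ∈ s ∪ p, a < b → w a b ≤ ENNReal.ofReal α)) ∨
      -- form (3)
      (∃ s : Finset (Fin N), σ = insert vO2 (unp2 s) ∧
        (∀ a ∈ s, ∀ b ∈ s, a < b → w a b ≤ ENNReal.ofReal α)) ∨
      -- form (4)
      (∃ p : Finset (Fin N), σ = insert vO2' (prm2 p)) := by
  constructor
  · rintro ⟨hne, hd⟩
    by_cases hO : (Sum.inr false : VH2 N) ∈ σ
    · -- form (3)
      right; right; left
      refine ⟨uIdx2 σ, ?_, ?_⟩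
      · ext x
        simp only [Finset.mem_insert, mem_unp2, vO2, uIdx2, Finset.mem_filter,
          Finset.mem_univ, true_and]
        constructor
        · intro hx
          match x with
          | Sum.inr false => exact Or.inl rfl
          | Sum.inr true =>
            exact absurd (hd _ hO _ hx (by simp)) (by simp [dhat2, dhat2_top_not_le])
          | Sum.inl (Sum.inl i) => exact Or.inr ⟨i, hx, rfl⟩
          | Sum.inl (Sum.inr i) =>
            exact absurd (hd _ hO _ hx (by simp)) (by simp [dhat2, dhat2_top_not_le])
        · rintro (rfl | ⟨i, hi, rfl⟩)
          · exact hO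
          · exact hi
      · intro a ha b hb hab
        simp only [uIdx2, Finset.mem_filter] at ha hb
        have := hd _ ha.2 _ hb.2 (by simpa using hab.ne)
        simpa [dhat2] using this
    · by_cases hO' : (Sum.inr true : VH2 N) ∈ σ
      · -- form (4)
        right; right; right
        refine ⟨pIdx2 σ, ?_⟩
        ext x
        simp only [Finset.mem_insert, mem_prm2, vO2', pIdx2, Finset.mem_filter,
          Finset.mem_univ, true_and]
        constructor
        · intro hx
          match x with
          | Sum.inr true => exact Or.inl rfl
          | Sum.inr false => exact absurd hx hO
          | Sum.inl (Sum.inr i) => exact Or.inr ⟨i, hx, rfl⟩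
          | Sum.inl (Sum.inl i) =>
            exact absurd (hd _ hO' _ hx (by simp)) (by simp [dhat2, dhat2_top_not_le])
        · rintro (rfl | ⟨i, hi, rfl⟩)
          · exact hO'
          · exact hi
      · -- forms (1) and (2)
        set s := uIdx2 σ with hs
        set p := pIdx2 σ with hp
        have hσ : σ = unp2 s ∪ prm2 p := by
          ext x
          simp only [Finset.mem_union, mem_unp2, mem_prm2, hs, hp, uIdx2, pIdx2,
            Finset.mem_filter, Finset.mem_univ, true_and]
          constructor
          · intro hx
            match x with
            | Sum.inr true => exact absurd hx hO'
            | Sum.inr false => exact absurd hx hO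
            | Sum.inl (Sum.inl i) => exact Or.inl ⟨i, hx, rfl⟩
            | Sum.inl (Sum.inr i) => exact Or.inr ⟨i, hx, rfl⟩
          · rintro (⟨i, hi, rfl⟩ | ⟨i, hi, rfl⟩) <;> exact hi
        have hmemA : ∀ a ∈ s, Sum.inl (Sum.inl a) ∈ σ := by
          intro a ha; simpa [hs, uIdx2] using ha
        have hmemA' : ∀ a ∈ p, Sum.inl (Sum.inr a) ∈ σ := by
          intro a ha; simpa [hp, pIdx2] using ha
        have hsp : ∀ a ∈ s, ∀ b ∈ p, a ≤ b := by
          intro a ha b hb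
          by_contra h
          push_neg at h
          have := hd _ (hmemA a ha) _ (hmemA' b hb) (by simp)
          rw [show dhat2 w (Sum.inl (Sum.inl a)) (Sum.inl (Sum.inr b)) = ⊤ by
            simp [dhat2, not_lt_of_gt h, (h.ne).symm, h.ne]] at this
          exact dhat2_top_not_le this
        have hwc : ∀ a ∈ s, ∀ b ∈ s ∪ p, a < b → w a b ≤ ENNReal.ofReal α := by
          intro a ha b hb hab
          rcases Finset.mem_union.mp hb with hb | hb
          · have := hd _ (hmemA a ha) _ (hmemA b hb) (by simpa using hab.ne)
            simpa [dhat2] using this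
          · have := hd _ (hmemA a ha) _ (hmemA' b hb) (by simp)
            simpa [dhat2, hab] using this
        have hsune : (s ∪ p).Nonempty := by
          rcases hne with ⟨x, hx⟩
          rw [hσ] at hx
          rcases Finset.mem_union.mp hx with hx | hx
          · rcases mem_unp2.mp hx with ⟨i, hi, rfl⟩
            exact ⟨i, Finset.mem_union_left _ hi⟩
          · rcases mem_prm2.mp hx with ⟨i, hi, rfl⟩
            exact ⟨i, Finset.mem_union_right _ hi⟩
        by_cases hint : (s ∩ p).Nonempty
        · left
          rcases hint with ⟨m, hm⟩
          rcases Finset.mem_inter.mp hm with ⟨hms, hmp⟩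
          exact ⟨s, p, ⟨m, hms⟩, ⟨m, hmp⟩,
            ⟨m, hms, hmp, fun a ha => hsp a ha m hmp, fun b hb => hsp m hms b hb⟩,
            hσ, hwc⟩
        · right; left
          refine ⟨s, p, hsune, ?_, hσ, hwc⟩
          intro a ha b hb
          rcases lt_or_eq_of_le (hsp a ha b hb) with h | h
          · exact h
          · exact absurd ⟨a, Finset.mem_inter.mpr ⟨ha, h ▸ hb⟩⟩ hint
  · rintro (⟨s, p, hsne, _, ⟨m, hms, hmp, hmax, hmin⟩, rfl, hwc⟩ |
      ⟨s, p, hne, hsp, rfl, hwc⟩ | ⟨s, rfl, hwc⟩ | ⟨p, rfl⟩)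
    · exact isVR_of_sp hw (fun a ha b hb => le_trans (hmax a ha) (hmin b hb)) hwc
        ⟨m, Finset.mem_union_left _ hms⟩
    · exact isVR_of_sp hw (fun a ha b hb => (hsp a ha b hb).le) hwc hne
    · -- form (3)
      refine ⟨⟨vO2, Finset.mem_insert_self _ _⟩, ?_⟩
      intro x hx y hy hxy
      rcases Finset.mem_insert.mp hx with rfl | hx
      · rcases Finset.mem_insert.mp hy with rfl | hy
        · exact absurd rfl hxy
        · rcases mem_unp2.mp hy with ⟨b, hb, rfl⟩
          simp [dhat2, vO2]
      · rcases mem_unp2.mp hx with ⟨a, ha, rfl⟩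
        rcases Finset.mem_insert.mp hy with rfl | hy
        · simp [dhat2, vO2]
        · rcases mem_unp2.mp hy with ⟨b, hb, rfl⟩
          have hab : a ≠ b := fun h => hxy (by rw [h])
          rcases lt_or_gt_of_ne hab with h | h
          · simpa [dhat2] using hwc a ha b hb h
          · have := hwc b hb a ha h
            simpa [dhat2, hw a b] using this
    · -- form (4)
      refine ⟨⟨vO2', Finset.mem_insert_self _ _⟩, ?_⟩
      intro x hx y hy hxy
      rcases Finset.mem_insert.mp hx with rfl | hx
      · rcases Finset.mem_insert.mp hy with rfl | hy
        · exact absurd rfl hxy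
        · rcases mem_prm2.mp hy with ⟨b, hb, rfl⟩
          simp [dhat2, vO2']
      · rcases mem_prm2.mp hx with ⟨a, ha, rfl⟩
        rcases Finset.mem_insert.mp hy with rfl | hy
        · simp [dhat2, vO2']
        · rcases mem_prm2.mp hy with ⟨b, hb, rfl⟩
          simp [dhat2]

end RTD
end
end
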